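/- For every k ≥ 1, if G is the path graph P_{3k+1} on 3k+1 vertices and v is a pendant (end) vertex of G, then γst(G/v) = γst(G) − 1; equivalently, γst(P_{3k}) = γst(P_{3k+1}) − 1. In particular, the lower bound γst(G) − 1 ≤ γst(G/v) for pendant vertices is tight. -/

import Mathlib

/-- The degree of a vertex `x` in a graph `G`. -/
noncomputable def sdeg {V : Type*} (G : SimpleGraph V) (x : V) : ℕ :=
  (G.neighborSet x).ncard

/-- `D` is a strong dominating set of `G`: every vertex `x ∉ D` has a neighbor
`y ∈ D` with `deg x ≤ deg y`. -/
def IsStrongDominating {V : Type*} (G : SimpleGraph V) (D : Set V) : Prop :=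
  ∀ x ∉ D, ∃ y ∈ D, G.Adj x y ∧ sdeg G x ≤ sdeg G y

/-- The strong domination number of `G`. -/
noncomputable def sdn {V : Type*} (G : SimpleGraph V) : ℕ :=
  sInf {n | ∃ D : Set V, IsStrongDominating G D ∧ D.ncard = n}

/-- Vertex deletion `G - v`: the induced subgraph on the complement of `{v}`. -/
def delVtx {V : Type*} (G : SimpleGraph V) (v : V) : SimpleGraph {x : V // x ≠ v} where
  Adj a b := G.Adj a.1 b.1
  symm := ⟨fun a b h => G.adj_symm h⟩
  loopless := ⟨fun a h => G.irrefl h⟩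

/-- Vertex contraction `G / v`: delete `v` and put a clique on its open neighborhood. -/
def contractVtx {V : Type*} (G : SimpleGraph V) (v : V) : SimpleGraph {x : V // x ≠ v} where
  Adj a b := a ≠ b ∧ (G.Adj a.1 b.1 ∨ (G.Adj v a.1 ∧ G.Adj v b.1))
  symm := by
    constructor; rintro a b ⟨hab, h | ⟨ha, hb⟩⟩
    · exact ⟨hab.symm, Or.inl h.symm⟩
    · exact ⟨hab.symm, Or.inr ⟨hb, ha⟩⟩
  loopless := by constructor; rintro a ⟨h, -⟩; exact h rfl

/-- `G ⊙ v`: remove all edges between any pair of neighbors of `v`. -/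
def odotVtx {V : Type*} (G : SimpleGraph V) (v : V) : SimpleGraph V where
  Adj x y := G.Adj x y ∧ ¬(G.Adj v x ∧ G.Adj v y)
  symm := by
    constructor; rintro x y ⟨h, hn⟩
    exact ⟨h.symm, fun hc => hn ⟨hc.2, hc.1⟩⟩
  loopless := by constructor; rintro x ⟨h, -⟩; exact G.irrefl h

/-- Edge contraction `G / uv`: merge `v` into `u`. -/
def contractEdge {V : Type*} (G : SimpleGraph V) (u v : V) : SimpleGraph {x : V // x ≠ v} where
  Adj a b := a ≠ b ∧ (G.Adj a.1 b.1 ∨ (a.1 = u ∧ G.Adj v b.1) ∨ (b.1 = u ∧ G.Adj v a.1))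
  symm := by
    constructor; rintro a b ⟨hab, h | h | h⟩
    · exact ⟨hab.symm, Or.inl h.symm⟩
    · exact ⟨hab.symm, Or.inr (Or.inr h)⟩
    · exact ⟨hab.symm, Or.inr (Or.inl h)⟩
  loopless := by constructor; rintro a ⟨h, -⟩; exact h rfl

/-- The star `K_{1,n}` with center `none` and leaves `some i`. -/
def starG (n : ℕ) : SimpleGraph (Option (Fin n)) where
  Adj a b := (a = none ∧ b ≠ none) ∨ (a ≠ none ∧ b = none)
  symm := by
    constructor; rintro a b (⟨h1, h2⟩ | ⟨h1, h2⟩)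
    · exact Or.inr ⟨h2, h1⟩
    · exact Or.inl ⟨h2, h1⟩
  loopless := by
    constructor; rintro a (⟨h1, h2⟩ | ⟨h1, h2⟩)
    exacts [h2 h1, h1 h2]

/-- The path graph `P_n` on vertices `0, …, n-1`, consecutive integers adjacent. -/
def pathG (n : ℕ) : SimpleGraph (Fin n) where
  Adj i j := i.1 + 1 = j.1 ∨ j.1 + 1 = i.1
  symm := ⟨fun i j h => h.symm⟩
  loopless := by constructor; rintro i (h | h) <;> omega

/-!
A vertex of a path dominates itself and at most two neighbours, so every strong dominating set
of `P_n` has at least `⌈n/3⌉` elements; the vertices `1, 4, 7, …` (the last one pulled back to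
`n - 2` when needed) form one of that size, whence `γst(P_n) = ⌈n/3⌉`. Contracting a pendant
vertex, whose neighbourhood is a single vertex, just deletes it, and deleting an end of
`P_{3k+1}` leaves `P_{3k}`; finally `⌈3k/3⌉ = ⌈(3k+1)/3⌉ - 1`.
-/

section Invariance

variable {V W : Type*} {G : SimpleGraph V} {H : SimpleGraph W}

lemma sdeg_iso_apply (e : G ≃g H) (x : V) : sdeg H (e x) = sdeg G x := by
  rw [sdeg, sdeg, ← e.image_neighborSet, Set.ncard_image_of_injective _ e.injective]

lemma IsStrongDominating.image_iso (e : G ≃g H) {D : Set V} (hD : IsStrongDominating G D) :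
    IsStrongDominating H (e '' D) := by
  intro x hx
  obtain ⟨y, hyD, hxy, hdeg⟩ := hD (e.symm x) fun h => hx ⟨_, h, e.apply_symm_apply x⟩
  refine ⟨e y, Set.mem_image_of_mem e hyD, by simpa using e.map_adj_iff.2 hxy, ?_⟩
  calc sdeg H x = sdeg G (e.symm x) := by simpa using sdeg_iso_apply e (e.symm x)
    _ ≤ sdeg G y := hdeg
    _ = sdeg H (e y) := (sdeg_iso_apply e y).symm

lemma sdn_congr (e : G ≃g H) : sdn G = sdn H := by
  unfold sdn
  congr 1
  ext n
  constructor
  · rintro ⟨D, hD, rfl⟩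
    exact ⟨e '' D, hD.image_iso e, Set.ncard_image_of_injective _ e.injective⟩
  · rintro ⟨D, hD, rfl⟩
    exact ⟨e.symm '' D, hD.image_iso e.symm, Set.ncard_image_of_injective _ e.symm.injective⟩

end Invariance

lemma card_le_mul_ncard_of_isStrongDominating {V : Type*} [Fintype V] {G : SimpleGraph V}
    {D : Set V} {Δ : ℕ} (hΔ : ∀ y, sdeg G y ≤ Δ) (hD : IsStrongDominating G D) :
    Fintype.card V ≤ (Δ + 1) * D.ncard := by
  classical
  have hdom : ∀ x, ∃ y ∈ D, x = y ∨ G.Adj y x := by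
    intro x
    by_cases hx : x ∈ D
    · exact ⟨x, hx, Or.inl rfl⟩
    · obtain ⟨y, hyD, hxy, -⟩ := hD x hx
      exact ⟨y, hyD, Or.inr hxy.symm⟩
  choose f hfD hf using hdom
  have hfiber : ∀ y, (Finset.univ.filter (f · = y)).card ≤ Δ + 1 := by
    intro y
    calc (Finset.univ.filter (f · = y)).card
        = (↑(Finset.univ.filter (f · = y)) : Set V).ncard := (Set.ncard_coe_finset _).symm
      _ ≤ (insert y (G.neighborSet y)).ncard := by
          refine Set.ncard_le_ncard ?_ (Set.toFinite _)
          intro x hx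
          simp only [Finset.coe_filter, Finset.mem_univ, true_and, Set.mem_ofPred_eq] at hx
          simpa [← hx] using hf x
      _ ≤ sdeg G y + 1 := Set.ncard_insert_le _ _
      _ ≤ Δ + 1 := Nat.add_le_add_right (hΔ y) 1
  have himage : (Finset.univ.image f).card ≤ D.ncard := by
    rw [← Set.ncard_coe_finset]
    refine Set.ncard_le_ncard ?_ (Set.toFinite D)
    intro y hy
    obtain ⟨x, -, rfl⟩ := Finset.mem_image.1 hy
    exact hfD x
  calc Fintype.card V = (Finset.univ : Finset V).card := Finset.card_univ.symm
    _ ≤ (Δ + 1) * (Finset.univ.image f).card :=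
        Finset.card_le_mul_card_image _ _ fun y _ => hfiber y
    _ ≤ (Δ + 1) * D.ncard := Nat.mul_le_mul_left _ himage

lemma contractVtx_eq_delVtx {V : Type*} {G : SimpleGraph V} {v : V}
    (hv : (G.neighborSet v).Subsingleton) : contractVtx G v = delVtx G v := by
  ext a b
  constructor
  · rintro ⟨hab, hadj | ⟨ha, hb⟩⟩
    · exact hadj
    · exact absurd (Subtype.ext (hv ha hb)) hab
  · intro hadj
    exact ⟨fun h => G.ne_of_adj hadj (congrArg Subtype.val h), Or.inl hadj⟩

section Path

variable {n : ℕ}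

lemma pathG_adj {i j : Fin n} : (pathG n).Adj i j ↔ i.1 + 1 = j.1 ∨ j.1 + 1 = i.1 := Iff.rfl

lemma sdeg_pathG (x : Fin n) :
    sdeg (pathG n) x = (if 0 < x.1 then 1 else 0) + (if x.1 + 1 < n then 1 else 0) := by
  have hx := x.2
  have hval : ∀ m, m ∈ Fin.val '' (pathG n).neighborSet x ↔
      m < n ∧ (m + 1 = x.1 ∨ x.1 + 1 = m) := by
    intro m
    constructor
    · rintro ⟨y, hy, rfl⟩
      exact ⟨y.2, (pathG_adj.1 hy).symm⟩
    · rintro ⟨hm, hadj⟩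
      exact ⟨⟨m, hm⟩, pathG_adj.2 hadj.symm, rfl⟩
  rw [sdeg, ← Set.ncard_image_of_injective _ Fin.val_injective]
  split_ifs with h0 hn hn
  · rw [show Fin.val '' (pathG n).neighborSet x = {x.1 - 1, x.1 + 1} by
      ext m; rw [hval]; simp only [Set.mem_insert_iff, Set.mem_singleton_iff]; omega]
    exact Set.ncard_pair (by omega)
  · rw [show Fin.val '' (pathG n).neighborSet x = {x.1 - 1} by
      ext m; rw [hval]; simp only [Set.mem_singleton_iff]; omega]
    exact Set.ncard_singleton _
  · rw [show Fin.val '' (pathG n).neighborSet x = {x.1 + 1} by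
      ext m; rw [hval]; simp only [Set.mem_singleton_iff]; omega]
    exact Set.ncard_singleton _
  · rw [show Fin.val '' (pathG n).neighborSet x = ∅ by
      ext m; rw [hval]; simp only [Set.mem_empty_iff_false, iff_false]; omega]
    exact Set.ncard_empty _

lemma sdeg_pathG_le_two (x : Fin n) : sdeg (pathG n) x ≤ 2 := by
  rw [sdeg_pathG]
  split_ifs <;> omega

lemma eq_zero_or_eq_last_of_sdeg_pathG_eq_one {x : Fin (n + 1)}
    (hx : sdeg (pathG (n + 1)) x = 1) : x = 0 ∨ x = Fin.last n := by
  rw [sdeg_pathG] at hx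
  have := x.2
  simp only [Fin.ext_iff, Fin.val_zero, Fin.val_last]
  split_ifs at hx <;> omega

/-- Capping at `n - 2` rather than `n - 1` keeps the last dominator off the end of the path, so that
(for `n ≥ 3`) it has degree `2` and strongly dominates both its neighbours. -/
def pathDominator (n : ℕ) (i : Fin ((n + 2) / 3)) : Fin n :=
  ⟨min (3 * i.1 + 1) (n - 2), by have := i.2; omega⟩

lemma pathDominator_injective : Function.Injective (pathDominator n) := by
  intro i j hij
  have hi := i.2
  have hj := j.2
  have := congrArg Fin.val hij
  simp only [pathDominator] at this
  exact Fin.ext (by omega)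

lemma isStrongDominating_range_pathDominator :
    IsStrongDominating (pathG n) (Set.range (pathDominator n)) := by
  intro x hx
  have hx3 : x.1 / 3 < (n + 2) / 3 := by have := x.2; omega
  set y := pathDominator n ⟨x.1 / 3, hx3⟩
  have hxy : x.1 ≠ y.1 := fun h => hx ⟨_, (Fin.ext h).symm⟩
  have hyval : y.1 = min (3 * (x.1 / 3) + 1) (n - 2) := rfl
  have hlt := x.2
  refine ⟨y, ⟨_, rfl⟩, pathG_adj.2 (by omega), ?_⟩
  rw [sdeg_pathG, sdeg_pathG]
  split_ifs <;> omega

theorem sdn_pathG (n : ℕ) : sdn (pathG n) = (n + 2) / 3 := by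
  refine IsLeast.csInf_eq ⟨⟨_, isStrongDominating_range_pathDominator, ?_⟩, ?_⟩
  · rw [← Set.image_univ, Set.ncard_image_of_injective _ pathDominator_injective,
      Set.ncard_univ, Nat.card_eq_fintype_card, Fintype.card_fin]
  · rintro m ⟨D, hD, rfl⟩
    have := card_le_mul_ncard_of_isStrongDominating sdeg_pathG_le_two hD
    rw [Fintype.card_fin] at this
    omega

def pathGIsoDelVtx {p : Fin (n + 1)} (hp : p = 0 ∨ p = Fin.last n) :
    pathG n ≃g delVtx (pathG (n + 1)) p where
  toEquiv := finSuccAboveEquiv p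
  map_rel_iff' {i j} := by
    change (pathG (n + 1)).Adj (p.succAbove i) (p.succAbove j) ↔ (pathG n).Adj i j
    rcases hp with rfl | rfl
    · simp only [Fin.succAbove_zero, pathG_adj, Fin.val_succ]
      omega
    · simp only [Fin.succAbove_last, pathG_adj, Fin.val_castSucc]

end Path

theorem sdn_path_pendant_contract_general (k : ℕ) :
    (∀ v : Fin (3 * k + 1), sdeg (pathG (3 * k + 1)) v = 1 →
      (sdn (contractVtx (pathG (3 * k + 1)) v) : ℤ) = (sdn (pathG (3 * k + 1)) : ℤ) - 1) ∧
    (sdn (pathG (3 * k)) : ℤ) = (sdn (pathG (3 * k + 1)) : ℤ) - 1 := by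
  have h3k : sdn (pathG (3 * k)) = k := by rw [sdn_pathG]; omega
  have h3k1 : sdn (pathG (3 * k + 1)) = k + 1 := by rw [sdn_pathG]; omega
  refine ⟨fun v hv => ?_, by rw [h3k, h3k1]; push_cast; ring⟩
  obtain ⟨w, hw⟩ := Set.ncard_eq_one.1 hv
  have hdel : contractVtx (pathG (3 * k + 1)) v = delVtx (pathG (3 * k + 1)) v :=
    contractVtx_eq_delVtx (hw ▸ Set.subsingleton_singleton)
  rw [hdel, ← sdn_congr (pathGIsoDelVtx (eq_zero_or_eq_last_of_sdeg_pathG_eq_one hv)), h3k, h3k1]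
  push_cast
  ring

/-- for k ≥ 1, contracting a pendant vertex of the path P_{3k+1} decreases
the strong domination number by exactly one; equivalently γst(P_{3k}) = γst(P_{3k+1}) − 1. -/
theorem sdn_path_pendant_contract (k : ℕ) (hk : 1 ≤ k) :
    (∀ v : Fin (3 * k + 1), sdeg (pathG (3 * k + 1)) v = 1 →
      (sdn (contractVtx (pathG (3 * k + 1)) v) : ℤ) = (sdn (pathG (3 * k + 1)) : ℤ) - 1) ∧
    (sdn (pathG (3 * k)) : ℤ) = (sdn (pathG (3 * k + 1)) : ℤ) - 1 :=
  sdn_path_pendant_contract_general k
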